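/- Let f and g be the morphisms on {0,1,2} defined by f(0) = 0210, f(1) = 02102, f(2) = 2021 and g(0) = 02, g(1) = 021, g(2) = 102, and let τ be the coding with τ(0) = τ(1) = 0, τ(2) = 1. Then τ(f^∞(0)) = τ(g^∞(0)). -/

import Mathlib

/-- A morphism `f : Γ → Γ⁺` applied to a finite word, by concatenation. -/
def applyW {Γ : Type*} (f : Γ → List Γ) (w : List Γ) : List Γ := w.flatMap f

/-- A morphism applied to an infinite sequence, by concatenation
(meaningful when every `f a` is nonempty: then the `n`-th letter of
`f(σ(0))f(σ(1))⋯` lies within the first `n+1` blocks). -/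
def applyS {Γ : Type*} (f : Γ → List Γ) (σ : ℕ → Γ) (n : ℕ) : Γ :=
  ((List.range (n + 1)).flatMap fun i => f (σ i)).getD n (σ 0)

/-- A coding applied letterwise to an infinite sequence. -/
def applyC {Γ S : Type*} (τ : Γ → S) (σ : ℕ → Γ) : ℕ → S := fun n => τ (σ n)

/-- The fixed point `f^∞(a)` of a morphism `f` with `f a = a·u`, `u` nonempty:
its `n`-th letter is the `n`-th letter of `f^(n+1)(a)` (which has length `> n`). -/
def fixpt {Γ : Type*} (f : Γ → List Γ) (a : Γ) (n : ℕ) : Γ :=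
  ((applyW f)^[n + 1] [a]).getD n a

/-!
The two fixed points agree letter by letter, so `τ` plays no role. Call a word *synchronized*
if its letters `2` are exactly the letters that follow a `0`. Up to a carry `κ`, with
`κ(0) = f(0)` and `κ(1) = κ(2) = ε`, the morphisms `f²` and `g³` agree on synchronized words:
`κ(c) f²(a) = g³(a) κ(a)` whenever `c a` is synchronized. Every word `1 g(w)` is synchronized,
so `f²(g^m(0)) = g^(m+3)(0) κ(x)` for the last letter `x` of `g^m(0)`; by induction `g^(3k)(0)`
is a prefix of `f^(2k)(0)`, and both words are prefixes of the respective fixed points.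
-/

theorem List.IsPrefix.getD_eq {α : Type*} {p q : List α} (h : p <+: q) {n : ℕ}
    (hn : n < p.length) (d : α) : p.getD n d = q.getD n d := by
  rw [List.getD_eq_getElem _ _ hn, List.getD_eq_getElem _ _ (hn.trans_le h.length_le),
    h.getElem hn]

theorem List.append_flatMap_eq_of_isChain {α β : Type*} {R : α → α → Prop}
    {φ ψ κ : α → List β} (h : ∀ c a, R c a → κ c ++ φ a = ψ a ++ κ a) :
    ∀ {c : α} {t : List α}, (c :: t).IsChain R →
      κ c ++ t.flatMap φ = t.flatMap ψ ++ κ (t.getLastD c)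
  | _, [], _ => by simp
  | c, a :: t, hct => by
    rw [List.isChain_cons_cons] at hct
    rw [List.flatMap_cons, List.flatMap_cons, List.getLastD_cons, ← List.append_assoc,
      h c a hct.1, List.append_assoc, List.append_flatMap_eq_of_isChain h hct.2,
      List.append_assoc]

section Morphism

variable {Γ : Type*} (f : Γ → List Γ)

theorem iterate_applyW_append (n : ℕ) (u v : List Γ) :
    (applyW f)^[n] (u ++ v) = (applyW f)^[n] u ++ (applyW f)^[n] v := by
  induction n generalizing u v with
  | zero => rfl
  | succ n ih => simp only [Function.iterate_succ_apply, applyW, List.flatMap_append, ih]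

theorem iterate_applyW_eq_flatMap (n : ℕ) (w : List Γ) :
    (applyW f)^[n] w = w.flatMap fun a => (applyW f)^[n] [a] := by
  induction w with
  | nil => exact Function.iterate_fixed rfl n
  | cons a w ih => rw [List.flatMap_cons, ← ih, ← iterate_applyW_append, List.singleton_append]

theorem List.IsPrefix.iterate_applyW {p q : List Γ} (h : p <+: q) (n : ℕ) :
    (applyW f)^[n] p <+: (applyW f)^[n] q := by
  obtain ⟨r, rfl⟩ := h
  rw [iterate_applyW_append]
  exact List.prefix_append _ _

theorem iterate_applyW_prefix_iterate {a : Γ} (ha : [a] <+: f a) {m n : ℕ} (hmn : m ≤ n) :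
    (applyW f)^[m] [a] <+: (applyW f)^[n] [a] := by
  induction n, hmn using Nat.le_induction with
  | base => exact List.prefix_rfl
  | succ n _ ih =>
    refine ih.trans ?_
    rw [Function.iterate_succ_apply]
    exact (ha.trans (List.prefix_append _ _)).iterate_applyW f n

variable {f}

theorem two_mul_length_le_length_applyW (hf : ∀ b, 2 ≤ (f b).length) (w : List Γ) :
    2 * w.length ≤ (applyW f w).length := by
  induction w with
  | nil => simp
  | cons a w ih =>
    simp only [applyW, List.flatMap_cons, List.length_append, List.length_cons] at ih ⊢
    linarith [hf a]

theorem lt_length_iterate_applyW (hf : ∀ b, 2 ≤ (f b).length) (a : Γ) (n : ℕ) :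
    n < ((applyW f)^[n] [a]).length := by
  induction n with
  | zero => simp
  | succ n ih =>
    rw [Function.iterate_succ_apply']
    linarith [two_mul_length_le_length_applyW hf ((applyW f)^[n] [a])]

theorem fixpt_eq_getD_iterate {a : Γ} (ha : [a] <+: f a) (hf : ∀ b, 2 ≤ (f b).length)
    {n m : ℕ} (hnm : n < m) : fixpt f a n = ((applyW f)^[m] [a]).getD n a :=
  (iterate_applyW_prefix_iterate f ha hnm).getD_eq
    (n.lt_succ_self.trans (lt_length_iterate_applyW hf a _)) a

end Morphism

namespace FixedPointExample

def f : Fin 3 → List (Fin 3) := ![[0, 2, 1, 0], [0, 2, 1, 0, 2], [2, 0, 2, 1]]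

def g : Fin 3 → List (Fin 3) := ![[0, 2], [0, 2, 1], [1, 0, 2]]

def Sync (c a : Fin 3) : Prop := c = 0 ↔ a = 2

instance : DecidableRel Sync := fun c a => inferInstanceAs (Decidable (c = 0 ↔ a = 2))

def carry (c : Fin 3) : List (Fin 3) := if c = 0 then f 0 else []

theorem carry_append_f_sq (c a : Fin 3) (h : Sync c a) :
    carry c ++ (applyW f)^[2] [a] = (applyW g)^[3] [a] ++ carry a := by
  revert c a; decide

theorem isChain_sync_applyW_g (w : List (Fin 3)) :
    (applyW g w).IsChain Sync ∧ ∀ y ∈ (applyW g w).head?, y ≠ 2 := by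
  induction w with
  | nil => simp [applyW]
  | cons a w ih =>
    have hblock : (g a).IsChain Sync ∧ (g a).head? ≠ some 2 ∧ (g a).getLast? ≠ some 0 ∧
        (g a).head?.isSome := by
      revert a; decide
    obtain ⟨hchain, hhead, hlast, hne⟩ := hblock
    simp only [applyW, List.flatMap_cons] at ih ⊢
    refine ⟨hchain.append ih.1 fun x hx y hy => ?_, ?_⟩
    · simp only [Sync, iff_false_intro (ne_of_mem_of_not_mem hx (by simpa using hlast)),
        iff_false_intro (ih.2 y hy)]
    · rw [List.head?_append, Option.or_of_isSome hne]
      exact fun y hy => ne_of_mem_of_not_mem hy (by simpa using hhead)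

theorem isChain_sync_one_cons_iterate_g (m : ℕ) : (1 :: (applyW g)^[m] [0]).IsChain Sync := by
  cases m with
  | zero => decide
  | succ m =>
    rw [Function.iterate_succ_apply']
    obtain ⟨hchain, hhead⟩ := isChain_sync_applyW_g ((applyW g)^[m] [0])
    exact hchain.cons fun y hy => by simp [Sync, hhead y hy]

theorem iterate_g_prefix_f_sq (m : ℕ) :
    (applyW g)^[3] ((applyW g)^[m] [0]) <+: (applyW f)^[2] ((applyW g)^[m] [0]) := by
  have hsync := List.append_flatMap_eq_of_isChain carry_append_f_sq
    (isChain_sync_one_cons_iterate_g m)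
  rw [show carry 1 = [] from rfl, List.nil_append] at hsync
  rw [iterate_applyW_eq_flatMap f, hsync, iterate_applyW_eq_flatMap g 3]
  exact List.prefix_append _ _

theorem iterate_g_prefix_iterate_f (k : ℕ) :
    (applyW g)^[3 * k] [0] <+: (applyW f)^[2 * k] [0] := by
  induction k with
  | zero => exact List.prefix_rfl
  | succ k ih =>
    rw [show 3 * (k + 1) = 3 + 3 * k by ring, show 2 * (k + 1) = 2 + 2 * k by ring,
      Function.iterate_add_apply (applyW g), Function.iterate_add_apply (applyW f)]
    exact (iterate_g_prefix_f_sq (3 * k)).trans (ih.iterate_applyW f 2)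

theorem fixpt_f_eq_fixpt_g (n : ℕ) : fixpt f 0 n = fixpt g 0 n := by
  have hf : ∀ b, 2 ≤ (f b).length := by decide
  have hg : ∀ b, 2 ≤ (g b).length := by decide
  rw [fixpt_eq_getD_iterate (by decide) hf (show n < 2 * (n + 1) by omega),
    fixpt_eq_getD_iterate (by decide) hg (show n < 3 * (n + 1) by omega),
    (iterate_g_prefix_iterate_f (n + 1)).getD_eq
      ((show n < 3 * (n + 1) by omega).trans (lt_length_iterate_applyW hg 0 _))]

end FixedPointExample

/-- `τ(f^∞(0)) = τ(g^∞(0))` for `f(0)=0210, f(1)=02102, f(2)=2021`,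
`g(0)=02, g(1)=021, g(2)=102` and `τ(0)=τ(1)=0, τ(2)=1`. -/
theorem stmt_13 :
    applyC (![0, 0, 1] : Fin 3 → Fin 2)
        (fixpt (![[0, 2, 1, 0], [0, 2, 1, 0, 2], [2, 0, 2, 1]] : Fin 3 → List (Fin 3)) 0) =
      applyC (![0, 0, 1] : Fin 3 → Fin 2)
        (fixpt (![[0, 2], [0, 2, 1], [1, 0, 2]] : Fin 3 → List (Fin 3)) 0) :=
  funext fun n => congrArg _ (FixedPointExample.fixpt_f_eq_fixpt_g n)
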